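/- Let α be a type with decidable equality, let n : ℕ, let x : Fin n → α, let D ⊆ Fin n, and let i ∉ D. Let next denote the least index j > i with j ∉ D and x j = x i, if such j exists. Then: (1) E_{D ∪ {i}}(x) i = 0; (2) for every index j ∉ D ∪ {i} such that next does not exist or j ≠ next, E_{D ∪ {i}}(x) j = E_D(x) j; and (3) if next exists, then E_{D ∪ {i}}(x) next = next − prev_{x,D}(i) when prev_{x,D}(i) exists, and E_{D ∪ {i}}(x) next = 0 otherwise. -/
import Mathlib


/-- The predecessor occurrence of position `i` in `x` avoiding the discarded set `D`:
the largest `j < i` with `j ∉ D` and `x j = x i`, as an element of `WithBot (Fin n)`. -/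
def prevOccD {α : Type*} [DecidableEq α] {n : ℕ} (x : Fin n → α) (D : Finset (Fin n))
    (i : Fin n) : WithBot (Fin n) :=
  (Finset.univ.filter (fun j : Fin n => j < i ∧ j ∉ D ∧ x j = x i)).max

/-- The next occurrence of position `i` in `x` avoiding the discarded set `D`:
the least `j > i` with `j ∉ D` and `x j = x i`, as an element of `WithTop (Fin n)`. -/
def nextOccD {α : Type*} [DecidableEq α] {n : ℕ} (x : Fin n → α) (D : Finset (Fin n))
    (i : Fin n) : WithTop (Fin n) :=
  (Finset.univ.filter (fun j : Fin n => i < j ∧ j ∉ D ∧ x j = x i)).min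

/-- The `D`-encoding of a parameterized string. -/
def encodeD {α : Type*} [DecidableEq α] {n : ℕ} (x : Fin n → α) (D : Finset (Fin n))
    (i : Fin n) : ℕ :=
  if i ∈ D then 0
  else
    match prevOccD x D i with
    | none => 0
    | some j => (i : ℕ) - (j : ℕ)
theorem encodeD_insert_spec {α : Type*} [DecidableEq α] (n : ℕ) (x : Fin n → α)
    (D : Finset (Fin n)) (i : Fin n) (hi : i ∉ D) :
    encodeD x (insert i D) i = 0 ∧
    (∀ j : Fin n, j ∉ insert i D → (j : WithTop (Fin n)) ≠ nextOccD x D i →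
        encodeD x (insert i D) j = encodeD x D j) ∧
    (∀ nx : Fin n, nextOccD x D i = (nx : WithTop (Fin n)) →
        (prevOccD x D i = ⊥ → encodeD x (insert i D) nx = 0) ∧
        (∀ pj : Fin n, prevOccD x D i = (pj : WithBot (Fin n)) →
            encodeD x (insert i D) nx = (nx : ℕ) - (pj : ℕ))) := by
  refine ⟨by simp [encodeD], ?_, ?_⟩
  · intro j hj hne
    have hji : j ≠ i := fun h => hj (by simp [h])
    have hjD : j ∉ D := fun h => hj (Finset.mem_insert_of_mem h)
    have hprev : prevOccD x (insert i D) j = prevOccD x D j := by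
      unfold prevOccD
      set S := Finset.univ.filter (fun j' : Fin n => j' < j ∧ j' ∉ D ∧ x j' = x j) with hS
      have hS' : Finset.univ.filter
          (fun j' : Fin n => j' < j ∧ j' ∉ insert i D ∧ x j' = x j) = S.erase i := by
        ext a
        simp only [hS, Finset.mem_filter, Finset.mem_univ, true_and, Finset.mem_erase,
          Finset.mem_insert, not_or]
        tauto
      rw [hS']
      by_cases hiS : i ∈ S
      · have hmem := Finset.mem_filter.mp hiS
        obtain ⟨hilt, hiD, hxi⟩ := hmem.2
        have hjN : j ∈ Finset.univ.filter (fun j' : Fin n => i < j' ∧ j' ∉ D ∧ x j' = x i) := by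
          simp only [Finset.mem_filter, Finset.mem_univ, true_and]
          exact ⟨hilt, hjD, hxi.symm⟩
        obtain ⟨nx, hnx⟩ := Finset.min_of_mem hjN
        have hnxmem := Finset.mem_of_min hnx
        simp only [Finset.mem_filter, Finset.mem_univ, true_and] at hnxmem
        obtain ⟨hinx, hnxD, hxnx⟩ := hnxmem
        have hnxle : nx ≤ j := by
          have := Finset.min_le_of_eq hjN hnx
          exact_mod_cast this
        have hnxne : nx ≠ j := by
          intro h; apply hne; unfold nextOccD; rw [hnx, h]
        have hnxS : nx ∈ S := by
          simp only [hS, Finset.mem_filter, Finset.mem_univ, true_and]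
          exact ⟨lt_of_le_of_ne hnxle hnxne, hnxD, hxnx.trans hxi⟩
        apply le_antisymm
        · exact Finset.max_mono (Finset.erase_subset i S)
        · obtain ⟨m, hm⟩ := Finset.max_of_mem hnxS
          have hmmem := Finset.mem_of_max hm
          have hnxlem : nx ≤ m := by
            have := Finset.le_max_of_eq hnxS hm
            exact_mod_cast this
          have hmne : m ≠ i := by
            intro h
            exact absurd (lt_of_lt_of_le hinx hnxlem) (by simp [h])
          rw [hm]
          exact Finset.le_max (Finset.mem_erase.mpr ⟨hmne, hmmem⟩)
      · rw [Finset.erase_eq_of_notMem hiS]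
    unfold encodeD
    rw [if_neg hj, if_neg hjD, hprev]
  · intro nx hnx
    have hnxmem := Finset.mem_of_min hnx
    simp only [Finset.mem_filter, Finset.mem_univ, true_and] at hnxmem
    obtain ⟨hinx, hnxD, hxnx⟩ := hnxmem
    have hnxnotin : nx ∉ insert i D := by
      simp only [Finset.mem_insert, not_or]
      exact ⟨fun h => absurd hinx (by simp [h]), hnxD⟩
    have hfilt : prevOccD x (insert i D) nx = prevOccD x D i := by
      unfold prevOccD
      congr 1
      ext a
      simp only [Finset.mem_filter, Finset.mem_univ, true_and, Finset.mem_insert, not_or]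
      constructor
      · rintro ⟨halt, ⟨hai, haD⟩, hxa⟩
        have hxai : x a = x i := hxa.trans hxnx
        have hnia : ¬ i < a := by
          intro h
          have haN : a ∈ Finset.univ.filter
              (fun j' : Fin n => i < j' ∧ j' ∉ D ∧ x j' = x i) := by
            simp only [Finset.mem_filter, Finset.mem_univ, true_and]
            exact ⟨h, haD, hxai⟩
          have := Finset.min_le_of_eq haN hnx
          have : nx ≤ a := by exact_mod_cast this
          exact absurd halt (not_lt.mpr this)
        exact ⟨lt_of_le_of_ne (not_lt.mp hnia) hai, haD, hxai⟩
      · rintro ⟨hai, haD, hxa⟩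
        exact ⟨hai.trans hinx, ⟨ne_of_lt hai, haD⟩, hxa.trans hxnx.symm⟩
    constructor
    · intro hbot
      unfold encodeD
      rw [if_neg hnxnotin, hfilt, hbot]
    · intro pj hpj
      unfold encodeD
      rw [if_neg hnxnotin, hfilt, hpj]
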